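/- Let b₂₀, a₃₁ ∈ ℝ with b₂₀ ≠ 0. Set Ã(x) = 1 − b₂₀²·(2 + a₃₁/b₂₀³)·x² − a₃₁·x³, B̃(x) = x + b₂₀·x², C̃(x) = −2·b₂₀ + b₂₀²·(4 + a₃₁/b₂₀³)·x + 2·a₃₁·x², and define f(x) = −(Ã′(x) − C̃(x))/Ã(x), g(x) = Ã(x)·B̃(x). Then there is a neighborhood of 0 on which g′(x) + f(x)·g(x) = 1 for all x. -/

import Mathlib

/-! Since `g = Ã·B̃`, the term `f·g = (C̃ - Ã')·B̃` cancels `Ã'·B̃` in `g' = Ã'·B̃ + Ã·B̃'` wherever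
`Ã ≠ 0`, so `g' + f·g = Ã·B̃' + C̃·B̃`. For these particular polynomials this is identically `1`:
the coefficients of `x²` and `x³` vanish once `b₂₀·(a₃₁/b₂₀) = a₃₁`. Near `0` we have `Ã ≠ 0`
because `Ã(0) = 1`. -/

theorem deriv_mul_add_lienard_mul_eq {A B C : ℝ → ℝ} {x : ℝ} (hA : DifferentiableAt ℝ A x)
    (hB : DifferentiableAt ℝ B x) (hAx : A x ≠ 0) :
    deriv (fun y => A y * B y) x + -(deriv A x - C x) / A x * (A x * B x) =
      A x * deriv B x + C x * B x := by
  rw [deriv_fun_mul hA hB]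
  field_simp
  ring

theorem exists_pos_forall_abs_lt_ne_zero {A : ℝ → ℝ} (hA : ContinuousAt A 0) (h0 : A 0 ≠ 0) :
    ∃ ε > (0 : ℝ), ∀ x : ℝ, |x| < ε → A x ≠ 0 := by
  simpa [Real.dist_eq] using Metric.eventually_nhds_iff.mp (hA.eventually_ne h0)

theorem case_VI_polynomial_identity {b a : ℝ} (hb : b ≠ 0) (x : ℝ) :
    (1 - b^2*(2 + a/b^3)*x^2 - a*x^3) * (1 + 2*b*x) +
      (-2*b + b^2*(4 + a/b^3)*x + 2*a*x^2) * (x + b*x^2) = 1 := by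
  field_simp
  ring

/-- Zero-Urabe-function isochronicity identity: with `Ã`, `B̃`, `C̃` as below and the
Liénard data `f(x) = −(Ã′(x) − C̃(x))/Ã(x)`, `g(x) = Ã(x)·B̃(x)`, the identity
`g′(x) + f(x)·g(x) = 1` holds on a neighborhood of `0`. -/
theorem stmt_11 (b20 a31 : ℝ) (hb20 : b20 ≠ 0) (A B C f g : ℝ → ℝ)
    (hA : ∀ x : ℝ, A x = 1 - b20^2*(2 + a31/b20^3)*x^2 - a31*x^3)
    (hB : ∀ x : ℝ, B x = x + b20*x^2)
    (hC : ∀ x : ℝ, C x = -2*b20 + b20^2*(4 + a31/b20^3)*x + 2*a31*x^2)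
    (hf : ∀ x : ℝ, f x = -(deriv A x - C x) / A x)
    (hg : ∀ x : ℝ, g x = A x * B x) :
    ∃ ε > (0 : ℝ), ∀ x : ℝ, |x| < ε → deriv g x + f x * g x = 1 := by
  have hA_poly : A = fun x => 1 - b20^2*(2 + a31/b20^3)*x^2 - a31*x^3 := funext hA
  have hB_poly : B = fun x => x + b20*x^2 := funext hB
  obtain rfl : g = fun x => A x * B x := funext hg
  have hA_diff : Differentiable ℝ A := by rw [hA_poly]; fun_prop
  have hB' (x : ℝ) : HasDerivAt B (1 + 2*b20*x) x := by
    rw [hB_poly]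
    refine ((hasDerivAt_id' x).fun_add ((hasDerivAt_pow 2 x).const_mul b20)).congr_deriv ?_
    norm_num
    ring
  obtain ⟨ε, hε, hAne⟩ :=
    exists_pos_forall_abs_lt_ne_zero hA_diff.continuous.continuousAt (by simp [hA])
  refine ⟨ε, hε, fun x hx => ?_⟩
  rw [hf, deriv_mul_add_lienard_mul_eq (hA_diff x) (hB' x).differentiableAt (hAne x hx),
    (hB' x).deriv, hA, hB, hC]
  exact case_VI_polynomial_identity hb20 x
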